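/- Let d_A, d_B be positive integers, let ρ be a density matrix on ℂ^{d_A} ⊗ ℂ^{d_B}, and let A₀, A₁ be Hermitian d_A×d_A complex matrices and B₀, B₁ Hermitian d_B×d_B complex matrices, each of operator norm at most 1. Then |Tr[ρ(A₀⊗B₀ + A₀⊗B₁ + A₁⊗B₀ − A₁⊗B₁)]| ≤ 2√2. -/

import Mathlib

/-!
Let `aᵢ = Aᵢ ⊗ 1` and `bⱼ = 1 ⊗ Bⱼ`: self-adjoint, with `aᵢ² ≤ 1`, `bⱼ² ≤ 1`, and every `aᵢ`
commuting with every `bⱼ`. For `C = a₀(b₀ + b₁) + a₁(b₀ - b₁)` the sum of squares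
`(a₀ - (b₀ + b₁)/√2)² + (a₁ - (b₀ - b₁)/√2)² = a₀² + a₁² + b₀² + b₁² - √2 C`
gives `√2 C ≤ 4` in the Loewner order, and replacing `bⱼ` by `-bⱼ` gives `-4 ≤ √2 C`.
Since `X ↦ Tr(ρX)` is monotone for `ρ ≥ 0` and `Tr ρ = 1`, `Tr(ρC)` is real with `|Tr(ρC)| ≤ 2√2`.
-/

open Matrix
open scoped Kronecker Matrix.Norms.L2Operator ComplexOrder MatrixOrder

section Ring

variable {R : Type*} [Ring R]

def chsh (a₀ a₁ b₀ b₁ : R) : R := a₀ * b₀ + a₀ * b₁ + a₁ * b₀ - a₁ * b₁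

theorem chsh_neg_neg (a₀ a₁ b₀ b₁ : R) : chsh a₀ a₁ (-b₀) (-b₁) = -chsh a₀ a₁ b₀ b₁ := by
  simp only [chsh]
  noncomm_ring

theorem chsh_sum_squares [Algebra ℝ R] {a₀ a₁ b₀ b₁ : R} (h₀₀ : Commute a₀ b₀)
    (h₀₁ : Commute a₀ b₁) (h₁₀ : Commute a₁ b₀) (h₁₁ : Commute a₁ b₁) (t : ℝ) :
    (a₀ - t • (b₀ + b₁)) * (a₀ - t • (b₀ + b₁)) + (a₁ - t • (b₀ - b₁)) * (a₁ - t • (b₀ - b₁)) =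
      a₀ * a₀ + a₁ * a₁ + (2 * t ^ 2) • (b₀ * b₀ + b₁ * b₁) - (2 * t) • chsh a₀ a₁ b₀ b₁ := by
  simp only [chsh, mul_add, add_mul, mul_sub, sub_mul, smul_mul_assoc, mul_smul_comm,
    ← h₀₀.eq, ← h₀₁.eq, ← h₁₀.eq, ← h₁₁.eq]
  module

variable [StarRing R] [PartialOrder R] [StarOrderedRing R] [Algebra ℝ R] [StarModule ℝ R]
  {a₀ a₁ b₀ b₁ : R}

theorem sqrt_two_smul_chsh_le (ha₀ : IsSelfAdjoint a₀) (ha₁ : IsSelfAdjoint a₁)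
    (hb₀ : IsSelfAdjoint b₀) (hb₁ : IsSelfAdjoint b₁) (h₀₀ : Commute a₀ b₀)
    (h₀₁ : Commute a₀ b₁) (h₁₀ : Commute a₁ b₀) (h₁₁ : Commute a₁ b₁) (ha₀' : a₀ * a₀ ≤ 1)
    (ha₁' : a₁ * a₁ ≤ 1) (hb₀' : b₀ * b₀ ≤ 1) (hb₁' : b₁ * b₁ ≤ 1) :
    √2 • chsh a₀ a₁ b₀ b₁ ≤ 4 := by
  have key := chsh_sum_squares h₀₀ h₀₁ h₁₀ h₁₁ (√2 / 2)
  rw [show 2 * (√2 / 2) ^ 2 = 1 by rw [div_pow, Real.sq_sqrt zero_le_two]; norm_num,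
    show 2 * (√2 / 2) = √2 by ring, one_smul] at key
  have ht : IsSelfAdjoint (√2 / 2) := .all _
  have hP := (ha₀.sub (ht.smul (hb₀.add hb₁))).mul_self_nonneg
  have hQ := (ha₁.sub (ht.smul (hb₀.sub hb₁))).mul_self_nonneg
  calc √2 • chsh a₀ a₁ b₀ b₁ ≤ a₀ * a₀ + a₁ * a₁ + (b₀ * b₀ + b₁ * b₁) := by
        rw [← sub_nonneg, ← key]; exact add_nonneg hP hQ
    _ ≤ 1 + 1 + (1 + 1) := by gcongr
    _ = 4 := by norm_num

theorem sqrt_two_smul_chsh_mem_Icc (ha₀ : IsSelfAdjoint a₀) (ha₁ : IsSelfAdjoint a₁)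
    (hb₀ : IsSelfAdjoint b₀) (hb₁ : IsSelfAdjoint b₁) (h₀₀ : Commute a₀ b₀)
    (h₀₁ : Commute a₀ b₁) (h₁₀ : Commute a₁ b₀) (h₁₁ : Commute a₁ b₁) (ha₀' : a₀ * a₀ ≤ 1)
    (ha₁' : a₁ * a₁ ≤ 1) (hb₀' : b₀ * b₀ ≤ 1) (hb₁' : b₁ * b₁ ≤ 1) :
    √2 • chsh a₀ a₁ b₀ b₁ ∈ Set.Icc (-4) 4 := by
  refine ⟨?_, sqrt_two_smul_chsh_le ha₀ ha₁ hb₀ hb₁ h₀₀ h₀₁ h₁₀ h₁₁ ha₀' ha₁' hb₀' hb₁'⟩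
  have h := sqrt_two_smul_chsh_le ha₀ ha₁ hb₀.neg hb₁.neg h₀₀.neg_right h₀₁.neg_right
    h₁₀.neg_right h₁₁.neg_right ha₀' ha₁' (by rwa [neg_mul_neg]) (by rwa [neg_mul_neg])
  rwa [chsh_neg_neg, smul_neg, neg_le] at h

end Ring

theorem CStarAlgebra.mul_self_le_one {A : Type*} [CStarAlgebra A] [PartialOrder A]
    [StarOrderedRing A] {a : A} (ha : IsSelfAdjoint a) (h : ‖a‖ ≤ 1) : a * a ≤ 1 := by
  calc a * a = star a * a := by rw [ha.star_eq]
    _ ≤ algebraMap ℝ A (‖a‖ ^ 2) := CStarAlgebra.star_mul_le_algebraMap_norm_sq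
    _ ≤ algebraMap ℝ A 1 := by gcongr; exact pow_le_one₀ (norm_nonneg a) h
    _ = 1 := map_one _

theorem Complex.norm_le_of_le_of_neg_le {z : ℂ} {r : ℝ} (h : z ≤ r) (h' : -z ≤ r) : ‖z‖ ≤ r := by
  obtain ⟨hre, him⟩ := Complex.le_def.mp h
  obtain ⟨hre', -⟩ := Complex.le_def.mp h'
  simp only [Complex.ofReal_re, Complex.ofReal_im, Complex.neg_re] at hre him hre'
  rw [← Complex.re_add_im z, him, Complex.ofReal_zero, zero_mul, add_zero, Complex.norm_real,
    Real.norm_eq_abs, abs_le]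
  constructor <;> linarith

namespace Matrix

variable {m n R 𝕜 : Type*} [RCLike 𝕜]

theorem IsHermitian.isSelfAdjoint_kronecker_one [CommSemiring R] [StarRing R] [DecidableEq n]
    {A : Matrix m m R} (hA : A.IsHermitian) :
    IsSelfAdjoint (A ⊗ₖ (1 : Matrix n n R)) := by
  rw [IsSelfAdjoint, star_eq_conjTranspose, conjTranspose_kronecker, hA.eq, conjTranspose_one]

theorem IsHermitian.isSelfAdjoint_one_kronecker [CommSemiring R] [StarRing R] [DecidableEq m]
    {B : Matrix n n R} (hB : B.IsHermitian) :
    IsSelfAdjoint ((1 : Matrix m m R) ⊗ₖ B) := by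
  rw [IsSelfAdjoint, star_eq_conjTranspose, conjTranspose_kronecker, hB.eq, conjTranspose_one]

variable [Fintype m] [Fintype n] [DecidableEq m] [DecidableEq n]

theorem commute_kronecker_one_one_kronecker [CommSemiring R] (A : Matrix m m R)
    (B : Matrix n n R) : Commute (A ⊗ₖ (1 : Matrix n n R)) ((1 : Matrix m m R) ⊗ₖ B) := by
  simp only [Commute, SemiconjBy, ← mul_kronecker_mul, mul_one, one_mul]

theorem chsh_kronecker [CommRing R] (A₀ A₁ : Matrix m m R) (B₀ B₁ : Matrix n n R) :
    chsh (A₀ ⊗ₖ (1 : Matrix n n R)) (A₁ ⊗ₖ 1) ((1 : Matrix m m R) ⊗ₖ B₀) (1 ⊗ₖ B₁) =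
      A₀ ⊗ₖ B₀ + A₀ ⊗ₖ B₁ + A₁ ⊗ₖ B₀ - A₁ ⊗ₖ B₁ := by
  simp only [chsh, ← mul_kronecker_mul, mul_one, one_mul]

theorem kronecker_one_mul_self_le_one {A : Matrix m m 𝕜} (hA : A * A ≤ 1) :
    A ⊗ₖ (1 : Matrix n n 𝕜) * A ⊗ₖ 1 ≤ 1 := by
  have h : 1 - A ⊗ₖ (1 : Matrix n n 𝕜) * A ⊗ₖ 1 = (1 - A * A) ⊗ₖ 1 := by
    rw [← mul_kronecker_mul, one_mul, sub_eq_iff_eq_add, ← add_kronecker, sub_add_cancel,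
      one_kronecker_one]
  rw [le_iff, h]
  exact (le_iff.mp hA).kronecker PosSemidef.one

theorem one_kronecker_mul_self_le_one {B : Matrix n n 𝕜} (hB : B * B ≤ 1) :
    (1 : Matrix m m 𝕜) ⊗ₖ B * 1 ⊗ₖ B ≤ 1 := by
  have h : 1 - (1 : Matrix m m 𝕜) ⊗ₖ B * 1 ⊗ₖ B = 1 ⊗ₖ (1 - B * B) := by
    rw [← mul_kronecker_mul, one_mul, sub_eq_iff_eq_add, ← kronecker_add, sub_add_cancel,
      one_kronecker_one]
  rw [le_iff, h]
  exact PosSemidef.one.kronecker (le_iff.mp hB)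

theorem PosSemidef.trace_mul_nonneg {ρ X : Matrix n n 𝕜} (hρ : ρ.PosSemidef)
    (hX : X.PosSemidef) : 0 ≤ (ρ * X).trace := by
  obtain ⟨r, rfl⟩ := CStarAlgebra.nonneg_iff_eq_star_mul_self.mp hρ.nonneg
  rw [trace_mul_cycle, trace_mul_cycle]
  exact (star_right_conjugate_nonneg hX.nonneg r).posSemidef.trace_nonneg

theorem norm_trace_mul_le_of_mem_Icc {ρ X : Matrix n n ℂ} (hρ : ρ.PosSemidef)
    (hρtr : ρ.trace = 1) {r : ℝ}
    (hX : X ∈ Set.Icc (-algebraMap ℝ _ r) (algebraMap ℝ _ r)) : ‖(ρ * X).trace‖ ≤ r := by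
  have htr : (ρ * algebraMap ℝ _ r).trace = (r : ℂ) := by
    rw [Algebra.algebraMap_eq_smul_one, mul_smul_comm, mul_one, trace_smul, hρtr,
      Complex.real_smul, mul_one]
  apply Complex.norm_le_of_le_of_neg_le
  · rw [← htr, ← sub_nonneg, ← trace_sub, ← mul_sub]
    exact hρ.trace_mul_nonneg (le_iff.mp hX.2)
  · rw [← htr, ← sub_nonneg, sub_neg_eq_add, ← trace_add, ← mul_add]
    exact hρ.trace_mul_nonneg (by simpa [le_iff, sub_neg_eq_add, add_comm] using hX.1)

end Matrix

theorem tsirelson_bound (dA dB : ℕ)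
    (ρ : Matrix (Fin dA × Fin dB) (Fin dA × Fin dB) ℂ)
    (hρ : ρ.PosSemidef) (hρtr : ρ.trace = 1)
    (A₀ A₁ : Matrix (Fin dA) (Fin dA) ℂ)
    (B₀ B₁ : Matrix (Fin dB) (Fin dB) ℂ)
    (hA₀ : A₀.IsHermitian) (hA₁ : A₁.IsHermitian)
    (hB₀ : B₀.IsHermitian) (hB₁ : B₁.IsHermitian)
    (hA₀n : ‖A₀‖ ≤ 1) (hA₁n : ‖A₁‖ ≤ 1)
    (hB₀n : ‖B₀‖ ≤ 1) (hB₁n : ‖B₁‖ ≤ 1) :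
    ‖(ρ * (A₀ ⊗ₖ B₀ + A₀ ⊗ₖ B₁ + A₁ ⊗ₖ B₀ - A₁ ⊗ₖ B₁)).trace‖
      ≤ 2 * Real.sqrt 2 := by
  have hC := sqrt_two_smul_chsh_mem_Icc
    hA₀.isSelfAdjoint_kronecker_one hA₁.isSelfAdjoint_kronecker_one
    hB₀.isSelfAdjoint_one_kronecker hB₁.isSelfAdjoint_one_kronecker
    (commute_kronecker_one_one_kronecker A₀ B₀) (commute_kronecker_one_one_kronecker A₀ B₁)
    (commute_kronecker_one_one_kronecker A₁ B₀) (commute_kronecker_one_one_kronecker A₁ B₁)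
    (kronecker_one_mul_self_le_one (CStarAlgebra.mul_self_le_one hA₀.isSelfAdjoint hA₀n))
    (kronecker_one_mul_self_le_one (CStarAlgebra.mul_self_le_one hA₁.isSelfAdjoint hA₁n))
    (one_kronecker_mul_self_le_one (CStarAlgebra.mul_self_le_one hB₀.isSelfAdjoint hB₀n))
    (one_kronecker_mul_self_le_one (CStarAlgebra.mul_self_le_one hB₁.isSelfAdjoint hB₁n))
  rw [chsh_kronecker, ← map_ofNat (algebraMap ℝ _) 4] at hC
  have h := norm_trace_mul_le_of_mem_Icc hρ hρtr hC
  rw [mul_smul_comm, trace_smul, norm_smul, Real.norm_of_nonneg (Real.sqrt_nonneg 2)] at h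
  have hs : √2 * (2 * √2) = 4 := by
    rw [mul_left_comm, Real.mul_self_sqrt zero_le_two]; norm_num
  exact le_of_mul_le_mul_left (hs ▸ h) (by positivity)
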